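/- Let N ≥ 3 and fix R ≥ 1. Then lim_{λ → 0⁺} λ^{-(N−2)/4} · (∫_{ℝ^N} |f(W_λ(x)) − f(V_R(λ,1)(x))|^{2N/(N+2)} dx)^{(N+2)/(2N)} = 0, where f(u) = |u|^{4/(N−2)}u and V_R(λ,1) is the truncated bubble with parameters λ₁ = λ, λ₂ = 1. -/

import Mathlib

open MeasureTheory Real Filter

noncomputable def groundW (N : ℕ) (x : EuclideanSpace ℝ (Fin N)) : ℝ :=
  (1 + ‖x‖ ^ 2 / ((N : ℝ) * ((N : ℝ) - 2))) ^ (-(((N : ℝ) - 2) / 2))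

noncomputable def fnl (N : ℕ) (u : ℝ) : ℝ :=
  |u| ^ ((4 : ℝ) / ((N : ℝ) - 2)) * u

/-- The rescaled ground state `W_λ`. -/
noncomputable def Wl (N : ℕ) (lam : ℝ) (x : EuclideanSpace ℝ (Fin N)) : ℝ :=
  lam ^ (-(((N : ℝ) - 2) / 2)) * groundW N (lam⁻¹ • x)

/-- The constant `ζ(λ₁, λ₂)`, equal to the value of `W_{λ₁}` on `|x| = R√(λ₁λ₂)`. -/
noncomputable def zeta (N : ℕ) (R l1 l2 : ℝ) : ℝ :=
  (l1 + R ^ 2 * l2 / ((N : ℝ) * ((N : ℝ) - 2))) ^ (-(((N : ℝ) - 2) / 2))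

/-- The truncated bubble `V_R(λ₁, λ₂)`. -/
noncomputable def VR (N : ℕ) (R l1 l2 : ℝ) (x : EuclideanSpace ℝ (Fin N)) : ℝ :=
  if ‖x‖ ≤ R * Real.sqrt (l1 * l2) then Wl N l1 x - zeta N R l1 l2 else 0

/-!
Write `W_λ = L ^ (-(N - 2) / 2)` with `L = λ + |x|² / (λ N (N - 2))` (`bubbleBase`). On the
ball `|x| ≤ R √λ` we have `L ≤ λ + R² / (N (N - 2)) = ζ ^ (-2 / (N - 2))`, so `0 ≤ V_R = W_λ - ζ`,
and the mean value bound `f(W) - f(W - ζ) ≤ f'(W) ζ` gives `≲ L ^ (-2)` since `ζ` stays bounded;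
off the ball `V_R = 0` and `|f(W_λ)| = L ^ (-(N + 2) / 2)` with `L ≥ R² / (N (N - 2))`. As `L` is
bounded above on the ball and below off it, both are `≲ L ^ (-k)` for `k = (N + 5) / 4`. The
substitution `x = λ y` turns the `L^{2N/(N+2)}` norm of `L ^ (-k)` into `λ ^ ((N - 1) / 4)` times
a finite constant, which beats the factor `λ ^ (-(N - 2) / 4)`.
-/

lemma rpow_sub_rpow_le_mul_sub {a b s : ℝ} (hb : 0 ≤ b) (hba : b ≤ a) (hs : 1 ≤ s) :
    a ^ s - b ^ s ≤ s * a ^ (s - 1) * (a - b) := by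
  obtain rfl | ha := (hb.trans hba).eq_or_lt
  · obtain rfl : b = 0 := le_antisymm hba hb
    simp [zero_rpow (by linarith : s ≠ 0)]
  -- Bernoulli's inequality for `b / a ∈ [0, 1]`, rescaled by `a ^ s`
  have hbern : 1 + s * (b / a - 1) ≤ (b / a) ^ s := by
    simpa using one_add_mul_self_le_rpow_one_add (s := b / a - 1)
      (by linarith [div_nonneg hb ha.le]) hs
  have has : a ^ s = a ^ (s - 1) * a := by rw [← rpow_add_one ha.ne']; ring_nf
  rw [div_rpow hb ha.le, le_div_iff₀ (rpow_pos_of_pos ha s)] at hbern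
  have : a ^ s * (1 + s * (b / a - 1)) = a ^ s - s * a ^ (s - 1) * (a - b) := by
    rw [has]; field_simp; ring
  linarith

lemma rpow_neg_le_rpow_sub_mul_of_le {L d a k : ℝ} (hL : 0 < L) (hLd : L ≤ d) (hak : a ≤ k) :
    L ^ (-a) ≤ d ^ (k - a) * L ^ (-k) := by
  rw [show -a = (k - a) + -k by ring, rpow_add hL]
  gcongr

lemma rpow_neg_le_rpow_sub_mul_of_ge {L c a k : ℝ} (hc : 0 < c) (hcL : c ≤ L) (hka : k ≤ a) :
    L ^ (-a) ≤ c ^ (k - a) * L ^ (-k) := by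
  rw [show -a = (k - a) + -k by ring, rpow_add (hc.trans_le hcL)]
  exact mul_le_mul_of_nonneg_right (rpow_le_rpow_of_nonpos hc hcL (by linarith))
    (rpow_nonneg (hc.trans_le hcL).le _)

noncomputable def bubbleBase (N : ℕ) (lam : ℝ) (x : EuclideanSpace ℝ (Fin N)) : ℝ :=
  lam + ‖x‖ ^ 2 / (lam * ((N : ℝ) * ((N : ℝ) - 2)))

section

variable {N : ℕ}

lemma bubbleBase_one_eq (hN : 2 ≤ N) (y : EuclideanSpace ℝ (Fin N)) :
    bubbleBase N 1 y = 1 + ‖(√((N : ℝ) * ((N : ℝ) - 2)))⁻¹ • y‖ ^ 2 := by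
  have hμ : 0 ≤ (N : ℝ) * ((N : ℝ) - 2) := by
    have : (2 : ℝ) ≤ N := by exact_mod_cast hN
    nlinarith
  rw [bubbleBase, one_mul, norm_smul, mul_pow, norm_inv, norm_of_nonneg (sqrt_nonneg _), inv_pow,
    sq_sqrt hμ, inv_mul_eq_div]

lemma bubbleBase_eq_mul_smul {lam : ℝ} (hlam : 0 < lam) (x : EuclideanSpace ℝ (Fin N)) :
    bubbleBase N lam x = lam * bubbleBase N 1 (lam⁻¹ • x) := by
  rw [bubbleBase, bubbleBase, norm_smul, norm_inv, norm_of_nonneg hlam.le]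
  field_simp

lemma bubbleBase_one_pos (hN : 2 ≤ N) (y : EuclideanSpace ℝ (Fin N)) : 0 < bubbleBase N 1 y := by
  rw [bubbleBase_one_eq hN]; positivity

lemma bubbleBase_pos (hN : 2 ≤ N) {lam : ℝ} (hlam : 0 < lam) (x : EuclideanSpace ℝ (Fin N)) :
    0 < bubbleBase N lam x := by
  rw [bubbleBase_eq_mul_smul hlam]; exact mul_pos hlam (bubbleBase_one_pos hN _)

lemma Wl_eq_bubbleBase_rpow (hN : 2 ≤ N) {lam : ℝ} (hlam : 0 < lam)
    (x : EuclideanSpace ℝ (Fin N)) :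
    Wl N lam x = bubbleBase N lam x ^ (-(((N : ℝ) - 2) / 2)) := by
  rw [bubbleBase_eq_mul_smul hlam, mul_rpow hlam.le (bubbleBase_one_pos hN _).le, Wl, groundW,
    bubbleBase, one_mul]

lemma integrable_bubbleBase_rpow_neg (hN : 3 ≤ N) {lam q : ℝ} (hlam : 0 < lam) (hq : N < 2 * q) :
    Integrable (fun x : EuclideanSpace ℝ (Fin N) ↦ bubbleBase N lam x ^ (-q)) := by
  have hμ : 0 < (N : ℝ) * ((N : ℝ) - 2) := by
    have : (3 : ℝ) ≤ N := by exact_mod_cast hN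
    nlinarith
  have h1 : Integrable (fun y : EuclideanSpace ℝ (Fin N) ↦ bubbleBase N 1 y ^ (-q)) := by
    have := (integrable_rpow_neg_one_add_norm_sq (E := EuclideanSpace ℝ (Fin N))
      (μ := volume) (r := 2 * q) (by simpa using hq)).comp_smul
      (inv_ne_zero (sqrt_pos.2 hμ).ne')
    simpa only [bubbleBase_one_eq (by omega : 2 ≤ N), mul_div_cancel_left₀ q two_ne_zero,
      neg_div] using this
  refine ((h1.comp_smul (inv_ne_zero hlam.ne')).const_mul (lam ^ (-q))).congr
    (Eventually.of_forall fun x ↦ ?_)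
  dsimp only
  rw [bubbleBase_eq_mul_smul hlam x,
    mul_rpow hlam.le (bubbleBase_one_pos (by omega : 2 ≤ N) _).le]

lemma integral_bubbleBase_rpow_neg (hN : 2 ≤ N) {lam : ℝ} (hlam : 0 < lam) (q : ℝ) :
    ∫ x : EuclideanSpace ℝ (Fin N), bubbleBase N lam x ^ (-q) =
      lam ^ ((N : ℝ) - q) * ∫ y : EuclideanSpace ℝ (Fin N), bubbleBase N 1 y ^ (-q) := by
  simp only [bubbleBase_eq_mul_smul hlam, mul_rpow hlam.le (bubbleBase_one_pos hN _).le,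
    integral_const_mul]
  rw [Measure.integral_comp_smul volume (fun y ↦ bubbleBase N 1 y ^ (-q)),
    finrank_euclideanSpace_fin, inv_pow, inv_inv, abs_of_pos (pow_pos hlam N), smul_eq_mul,
    ← mul_assoc, ← rpow_natCast, ← rpow_add hlam, neg_add_eq_sub]

lemma fnl_of_nonneg (hN : 3 ≤ N) {u : ℝ} (hu : 0 ≤ u) :
    fnl N u = u ^ (((N : ℝ) + 2) / ((N : ℝ) - 2)) := by
  have hN2 : 0 < (N : ℝ) - 2 := by
    have : (3 : ℝ) ≤ N := by exact_mod_cast hN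
    linarith
  obtain rfl | hu := hu.eq_or_lt
  · rw [zero_rpow (by positivity)]; simp [fnl]
  rw [fnl, abs_of_pos hu, ← rpow_add_one hu.ne']
  congr 1
  field_simp
  ring

lemma fnl_Wl (hN : 3 ≤ N) {lam : ℝ} (hlam : 0 < lam) (x : EuclideanSpace ℝ (Fin N)) :
    fnl N (Wl N lam x) = bubbleBase N lam x ^ (-(((N : ℝ) + 2) / 2)) := by
  have hN2 : (N : ℝ) - 2 ≠ 0 := by
    have : (3 : ℝ) ≤ N := by exact_mod_cast hN
    linarith
  have hL := bubbleBase_pos (by omega : 2 ≤ N) hlam x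
  rw [Wl_eq_bubbleBase_rpow (by omega) hlam, fnl_of_nonneg hN (rpow_nonneg hL.le _),
    ← rpow_mul hL.le]
  congr 1
  field_simp

lemma bubbleBase_le_iff (hN : 3 ≤ N) {lam R : ℝ} (hlam : 0 < lam) (hR : 0 ≤ R)
    (x : EuclideanSpace ℝ (Fin N)) :
    bubbleBase N lam x ≤ lam + R ^ 2 / ((N : ℝ) * ((N : ℝ) - 2)) ↔ ‖x‖ ≤ R * √lam := by
  have hμ : 0 < (N : ℝ) * ((N : ℝ) - 2) := by
    have : (3 : ℝ) ≤ N := by exact_mod_cast hN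
    nlinarith
  rw [bubbleBase, add_le_add_iff_left, ← sq_le_sq₀ (norm_nonneg x) (by positivity), mul_pow,
    sq_sqrt hlam.le, ← div_div, div_le_div_iff_of_pos_right hμ, div_le_iff₀ hlam]

lemma exists_abs_fnl_Wl_sub_fnl_VR_le_of_norm_le (hN : 3 ≤ N) {R k : ℝ} (hR : 0 < R)
    (hk : 2 ≤ k) :
    ∃ C, ∀ lam ∈ Set.Ioc (0 : ℝ) 1, ∀ x : EuclideanSpace ℝ (Fin N), ‖x‖ ≤ R * √lam →
      |fnl N (Wl N lam x) - fnl N (VR N R lam 1 x)| ≤ C * bubbleBase N lam x ^ (-k) := by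
  have hN3 : (3 : ℝ) ≤ N := by exact_mod_cast hN
  set μ : ℝ := (N : ℝ) * ((N : ℝ) - 2)
  set m : ℝ := ((N : ℝ) - 2) / 2 with hm_def
  set s : ℝ := ((N : ℝ) + 2) / ((N : ℝ) - 2) with hs_def
  have hμ : 0 < μ := by nlinarith
  have hm : 0 < m := by rw [hm_def]; linarith
  have hs : 1 ≤ s := by rw [hs_def, le_div_iff₀ (by linarith)]; linarith
  have hms : -m * (s - 1) = -2 := by
    have : (N : ℝ) - 2 ≠ 0 := by linarith
    rw [hm_def, hs_def]; field_simp; ring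
  refine ⟨s * (1 + R ^ 2 / μ) ^ (k - 2) * (R ^ 2 / μ) ^ (-m),
    fun lam ⟨hlam, hlam1⟩ x hx ↦ ?_⟩
  set L := bubbleBase N lam x
  set Lr := lam + R ^ 2 / μ with hLr_def
  have hL : 0 < L := bubbleBase_pos (by omega) hlam x
  have hLLr : L ≤ Lr := (bubbleBase_le_iff hN hlam hR.le x).2 hx
  have hW : Wl N lam x = L ^ (-m) := Wl_eq_bubbleBase_rpow (by omega) hlam x
  have hζ : zeta N R lam 1 = Lr ^ (-m) := by rw [zeta, mul_one]
  have hζW : Lr ^ (-m) ≤ L ^ (-m) := rpow_le_rpow_of_nonpos hL hLLr (by linarith)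
  have hV : 0 ≤ L ^ (-m) - Lr ^ (-m) := sub_nonneg.2 hζW
  have hVW : L ^ (-m) - Lr ^ (-m) ≤ L ^ (-m) := sub_le_self _ (rpow_nonneg (hL.le.trans hLLr) _)
  have hVR : VR N R lam 1 x = L ^ (-m) - Lr ^ (-m) := by
    rw [VR, if_pos (by rwa [mul_one]), hW, hζ]
  have hf : ∀ u, 0 ≤ u → fnl N u = u ^ s := fun u hu ↦ fnl_of_nonneg hN hu
  rw [hW, hVR, hf _ (rpow_nonneg hL.le _), hf _ hV,
    abs_of_nonneg (sub_nonneg.2 (rpow_le_rpow hV hVW (by linarith)))]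
  calc (L ^ (-m)) ^ s - (L ^ (-m) - Lr ^ (-m)) ^ s
      ≤ s * (L ^ (-m)) ^ (s - 1) * (L ^ (-m) - (L ^ (-m) - Lr ^ (-m))) :=
        rpow_sub_rpow_le_mul_sub hV hVW hs
    _ = s * L ^ (-2 : ℝ) * Lr ^ (-m) := by rw [← rpow_mul hL.le, hms]; ring
    _ ≤ s * ((1 + R ^ 2 / μ) ^ (k - 2) * L ^ (-k)) * (R ^ 2 / μ) ^ (-m) := by
        gcongr ?_ * ?_
        · exact mul_le_mul_of_nonneg_left (rpow_neg_le_rpow_sub_mul_of_le hL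
            (hLLr.trans (by rw [hLr_def]; linarith)) hk) (by linarith)
        · exact rpow_le_rpow_of_nonpos (by positivity) (by rw [hLr_def]; linarith)
            (by linarith)
    _ = s * (1 + R ^ 2 / μ) ^ (k - 2) * (R ^ 2 / μ) ^ (-m) * L ^ (-k) := by ring

lemma exists_abs_fnl_Wl_sub_fnl_VR_le_of_lt_norm (hN : 3 ≤ N) {R k : ℝ} (hR : 0 < R)
    (hk : k ≤ ((N : ℝ) + 2) / 2) :
    ∃ C, ∀ lam > (0 : ℝ), ∀ x : EuclideanSpace ℝ (Fin N), R * √lam < ‖x‖ →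
      |fnl N (Wl N lam x) - fnl N (VR N R lam 1 x)| ≤ C * bubbleBase N lam x ^ (-k) := by
  have hμ : 0 < (N : ℝ) * ((N : ℝ) - 2) := by
    have : (3 : ℝ) ≤ N := by exact_mod_cast hN
    nlinarith
  refine ⟨(R ^ 2 / ((N : ℝ) * ((N : ℝ) - 2))) ^ (k - ((N : ℝ) + 2) / 2),
    fun lam hlam x hx ↦ ?_⟩
  have hL := (bubbleBase_le_iff hN hlam hR.le x).not.2 hx.not_ge
  have hVR : VR N R lam 1 x = 0 := by rw [VR, if_neg (by rwa [mul_one, not_le])]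
  have hpos := bubbleBase_pos (by omega : 2 ≤ N) hlam x
  rw [hVR, fnl_Wl hN hlam, show fnl N 0 = 0 by simp [fnl], sub_zero,
    abs_of_nonneg (rpow_nonneg hpos.le _)]
  exact rpow_neg_le_rpow_sub_mul_of_ge (by positivity) (by linarith [not_le.1 hL]) hk

lemma exists_abs_fnl_Wl_sub_fnl_VR_le (hN : 3 ≤ N) {R k : ℝ} (hR : 0 < R) (hk₂ : 2 ≤ k)
    (hk : k ≤ ((N : ℝ) + 2) / 2) :
    ∃ C ≥ 0, ∀ lam ∈ Set.Ioc (0 : ℝ) 1, ∀ x : EuclideanSpace ℝ (Fin N),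
      |fnl N (Wl N lam x) - fnl N (VR N R lam 1 x)| ≤ C * bubbleBase N lam x ^ (-k) := by
  obtain ⟨C₁, h₁⟩ := exists_abs_fnl_Wl_sub_fnl_VR_le_of_norm_le hN hR hk₂
  obtain ⟨C₂, h₂⟩ := exists_abs_fnl_Wl_sub_fnl_VR_le_of_lt_norm hN hR hk
  refine ⟨max (max C₁ C₂) 0, le_max_right _ _, fun lam hlam x ↦ ?_⟩
  have hL := rpow_nonneg (bubbleBase_pos (by omega : 2 ≤ N) hlam.1 x).le (-k)
  rcases le_or_gt ‖x‖ (R * √lam) with hx | hx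
  · exact (h₁ lam hlam x hx).trans (mul_le_mul_of_nonneg_right (by simp) hL)
  · exact (h₂ lam hlam.1 x hx).trans (mul_le_mul_of_nonneg_right (by simp) hL)

lemma integral_rpow_le_of_abs_le_bubbleBase (hN : 3 ≤ N) {g : EuclideanSpace ℝ (Fin N) → ℝ}
    {C lam k p : ℝ} (hC : 0 ≤ C) (hlam : 0 < lam) (hp : 0 < p) (hkp : N < 2 * (k * p))
    (hg : ∀ x, |g x| ≤ C * bubbleBase N lam x ^ (-k)) :
    ∫ x, |g x| ^ p ≤
      C ^ p * lam ^ ((N : ℝ) - k * p) * ∫ y, bubbleBase N 1 y ^ (-(k * p)) := by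
  have hpt : ∀ x, |g x| ^ p ≤ C ^ p * bubbleBase N lam x ^ (-(k * p)) := fun x ↦ by
    have hL := (bubbleBase_pos (by omega : 2 ≤ N) hlam x).le
    calc |g x| ^ p ≤ (C * bubbleBase N lam x ^ (-k)) ^ p := by gcongr; exact hg x
      _ = C ^ p * bubbleBase N lam x ^ (-(k * p)) := by
        rw [mul_rpow hC (rpow_nonneg hL _), ← rpow_mul hL, neg_mul]
  calc ∫ x, |g x| ^ p ≤ ∫ x, C ^ p * bubbleBase N lam x ^ (-(k * p)) :=
        integral_mono_of_nonneg (Eventually.of_forall fun x ↦ by positivity)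
          ((integrable_bubbleBase_rpow_neg hN hlam hkp).const_mul _) (Eventually.of_forall hpt)
    _ = _ := by rw [integral_const_mul, integral_bubbleBase_rpow_neg (by omega) hlam, mul_assoc]

lemma exists_dual_norm_fnl_Wl_sub_fnl_VR_le (hN : 3 ≤ N) {R : ℝ} (hR : 0 < R) :
    ∃ C, ∀ lam ∈ Set.Ioc (0 : ℝ) 1,
      (∫ x : EuclideanSpace ℝ (Fin N),
          |fnl N (Wl N lam x) - fnl N (VR N R lam 1 x)| ^ (2 * (N : ℝ) / ((N : ℝ) + 2))) ^
        (((N : ℝ) + 2) / (2 * (N : ℝ))) ≤ C * lam ^ (((N : ℝ) - 1) / 4) := by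
  have hN3 : (3 : ℝ) ≤ N := by exact_mod_cast hN
  set p : ℝ := 2 * (N : ℝ) / ((N : ℝ) + 2) with hp_def
  set q : ℝ := ((N : ℝ) + 2) / (2 * (N : ℝ)) with hq_def
  -- any `k` with `2 ≤ k ≤ (N + 2) / 2` (pointwise bound), `N < 2 k p` (integrability) and
  -- `k < (N + 6) / 4` (to beat `λ ^ (-(N - 2) / 4)` in the end) would do
  set k : ℝ := ((N : ℝ) + 5) / 4 with hk_def
  have hpq : p * q = 1 := by rw [hp_def, hq_def]; field_simp
  have hkp : (N : ℝ) < 2 * (k * p) := by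
    rw [hk_def, hp_def, ← sub_pos]; field_simp; ring_nf; positivity
  have hexp : ((N : ℝ) - k * p) * q = ((N : ℝ) - 1) / 4 := by
    rw [sub_mul, mul_assoc, hpq, hq_def, hk_def]; field_simp; ring
  obtain ⟨C, hC, hCbound⟩ := exists_abs_fnl_Wl_sub_fnl_VR_le hN hR (k := k)
    (by linarith) (by linarith)
  set I := ∫ y : EuclideanSpace ℝ (Fin N), bubbleBase N 1 y ^ (-(k * p))
  have hI : 0 ≤ I := integral_nonneg fun y ↦ rpow_nonneg (bubbleBase_one_pos (by omega) y).le _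
  refine ⟨C * I ^ q, fun lam hlam ↦ ?_⟩
  have hlam0 := hlam.1
  calc _ ≤ (C ^ p * lam ^ ((N : ℝ) - k * p) * I) ^ q := by
        gcongr
        exact integral_rpow_le_of_abs_le_bubbleBase hN hC hlam0 (by positivity) hkp
          (hCbound lam hlam)
    _ = C * I ^ q * lam ^ (((N : ℝ) - 1) / 4) := by
        rw [mul_rpow (by positivity) hI, mul_rpow (by positivity) (by positivity),
          ← rpow_mul hC, ← rpow_mul hlam0.le, hpq, rpow_one, hexp]
        ring

end

theorem f_of_truncation_dual_norm_small (N : ℕ) (hN : 3 ≤ N) (R : ℝ) (hR : 1 ≤ R) :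
    Tendsto (fun lam : ℝ =>
        lam ^ (-(((N : ℝ) - 2) / 4)) *
          (∫ x : EuclideanSpace ℝ (Fin N),
              |fnl N (Wl N lam x) - fnl N (VR N R lam 1 x)| ^ (2 * (N : ℝ) / ((N : ℝ) + 2))) ^
            (((N : ℝ) + 2) / (2 * (N : ℝ))))
      (nhdsWithin 0 (Set.Ioi 0)) (nhds 0) := by
  obtain ⟨C, hC⟩ := exists_dual_norm_fnl_Wl_sub_fnl_VR_le hN (R := R) (by linarith)
  refine squeeze_zero' (g := fun lam ↦ C * lam ^ (1 / 4 : ℝ)) ?_ ?_ ?_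
  · filter_upwards [self_mem_nhdsWithin] with lam (hlam : 0 < lam)
    positivity
  · filter_upwards [Ioc_mem_nhdsGT zero_lt_one] with lam hlam
    have hlam0 := hlam.1
    calc _ ≤ lam ^ (-(((N : ℝ) - 2) / 4)) * (C * lam ^ (((N : ℝ) - 1) / 4)) := by
          gcongr
          exact hC lam hlam
      _ = C * lam ^ (1 / 4 : ℝ) := by
          rw [mul_left_comm, ← rpow_add hlam0]
          ring_nf
  · simpa using ((continuous_rpow_const (by norm_num : (0 : ℝ) ≤ 1 / 4)).tendsto 0).mono_left
      nhdsWithin_le_nhds |>.const_mul C
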